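/- arXiv:2501.01623 — 7 statements merged into one kernel-verified Lean document; each statement's English description precedes it below -/
import Mathlib

section
/- Under Independence, Monotonicity, and Relevance, the wave-1 Wald estimand identifies the local average treatment effect: P(T_1(1) > T_1(0)) > 0 and E[Y_1(1) − Y_1(0) | T_1(1) > T_1(0)] = (E[Y_1 | Z = 1] − E[Y_1 | Z = 0]) / (E[T_1 | Z = 1] − E[T_1 | Z = 0]). -/
open MeasureTheory ProbabilityTheory Finset

/-- Conditional mean `E[X | A]`: the expectation of `X` under `P` conditioned on the event `A`. -/
noncomputable def cmean {Ω : Type*} [MeasurableSpace Ω] (P : MeasureTheory.Measure Ω)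
    (A : Set Ω) (X : Ω → ℝ) : ℝ :=
  ∫ ω, X ω ∂(P[|A])

lemma cmean_eq_inv_mul {Ω : Type*} [MeasurableSpace Ω] (P : MeasureTheory.Measure Ω)
    (A : Set Ω) (X : Ω → ℝ) :
    cmean P A X = (P A).toReal⁻¹ * ∫ ω in A, X ω ∂P := by
  unfold cmean
  rw [ProbabilityTheory.cond, integral_smul_measure, ENNReal.toReal_inv, smul_eq_mul]

/-- If a real function of `V` is independent of `Z`, its integral over `{Z = z}` splits. -/
lemma indep_setIntegral {Ω β : Type*} [MeasurableSpace Ω] [MeasurableSpace β]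
    (P : MeasureTheory.Measure Ω) [IsProbabilityMeasure P]
    {V : Ω → β} {Z : Ω → ℕ} (hZ : Measurable Z)
    (hInd : IndepFun V Z P) {g : β → ℝ} (hg : Measurable g)
    (hint : MeasureTheory.Integrable (fun ω => g (V ω)) P) (z : ℕ) :
    ∫ ω in {ω | Z ω = z}, g (V ω) ∂P = (P {ω | Z ω = z}).toReal * ∫ ω, g (V ω) ∂P := by
  have hA : MeasurableSet {ω | Z ω = z} := hZ (measurableSet_singleton z)
  set W : Ω → ℝ := fun ω => if Z ω = z then 1 else 0 with hWdef
  have hWind : W = Set.indicator {ω | Z ω = z} (fun _ => (1:ℝ)) := by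
    funext ω; by_cases h : Z ω = z <;> simp [hWdef, h]
  have hWint : MeasureTheory.Integrable W P := by
    rw [hWind]; exact (integrable_const 1).indicator hA
  have hcomp : IndepFun (fun ω => g (V ω)) W P := by
    have hh : Measurable (fun n : ℕ => if n = z then (1:ℝ) else 0) :=
      Measurable.ite (measurableSet_singleton z) measurable_const measurable_const
    exact hInd.comp hg hh
  have hmul := hcomp.integral_fun_mul_eq_mul_integral hint.1 hWint.1
  have h1 : (fun ω => g (V ω) * W ω) = Set.indicator {ω | Z ω = z} (fun ω => g (V ω)) := by
    funext ω; by_cases h : Z ω = z <;> simp [hWdef, h]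
  have h2 : ∫ ω, W ω ∂P = (P {ω | Z ω = z}).toReal := by
    rw [hWind, integral_indicator hA, setIntegral_const, smul_eq_mul, mul_one, measureReal_def]
  calc ∫ ω in {ω | Z ω = z}, g (V ω) ∂P
      = ∫ ω, Set.indicator {ω | Z ω = z} (fun ω => g (V ω)) ω ∂P := (integral_indicator hA).symm
    _ = ∫ ω, g (V ω) * W ω ∂P := by rw [h1]
    _ = (∫ ω, g (V ω) ∂P) * ∫ ω, W ω ∂P := hmul
    _ = (P {ω | Z ω = z}).toReal * ∫ ω, g (V ω) ∂P := by rw [h2, mul_comm]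

theorem wald_late_wave1
    {Ω : Type*} [MeasurableSpace Ω] (P : MeasureTheory.Measure Ω) [IsProbabilityMeasure P]
    (Z : Ω → ℕ) (hZmeas : Measurable Z) (hZbin : ∀ ω, Z ω ≤ 1)
    (hZpos : 0 < P {ω | Z ω = 1}) (hZlt : P {ω | Z ω = 1} < 1)
    (wbar : ℕ) (hwbar : 1 ≤ wbar)
    (T : ℕ → ℕ → Ω → ℕ) (hTmeas : ∀ w z, Measurable (T w z))
    (hTrange : ∀ w ∈ Set.Icc 1 wbar, ∀ z ≤ 1, ∀ ω, T w z ω ≤ w)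
    (Y : ℕ → ℕ → Ω → ℝ) (hYmeas : ∀ w t, Measurable (Y w t))
    (hYint : ∀ w ∈ Set.Icc 1 wbar, ∀ t ≤ w, MeasureTheory.Integrable (Y w t) P)
    (hIndep : ∀ w ∈ Set.Icc 1 wbar,
      IndepFun (fun ω => ((fun t : ℕ => Y w t ω), T w 1 ω, T w 0 ω)) Z P)
    (hMono : ∀ w ∈ Set.Icc 1 wbar, ∀ᵐ ω ∂P, T w 0 ω ≤ T w 1 ω)
    (hRel : cmean P {ω | Z ω = 0} (fun ω => (T 1 (Z ω) ω : ℝ))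
          < cmean P {ω | Z ω = 1} (fun ω => (T 1 (Z ω) ω : ℝ))) :
    0 < P {ω | T 1 0 ω < T 1 1 ω} ∧
    cmean P {ω | T 1 0 ω < T 1 1 ω} (fun ω => Y 1 1 ω - Y 1 0 ω) =
      (cmean P {ω | Z ω = 1} (fun ω => Y 1 (T 1 (Z ω) ω) ω)
        - cmean P {ω | Z ω = 0} (fun ω => Y 1 (T 1 (Z ω) ω) ω)) /
      (cmean P {ω | Z ω = 1} (fun ω => (T 1 (Z ω) ω : ℝ))
        - cmean P {ω | Z ω = 0} (fun ω => (T 1 (Z ω) ω : ℝ))) := by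
  have h1 : (1 : ℕ) ∈ Set.Icc 1 wbar := ⟨le_refl 1, hwbar⟩
  have hT1le : ∀ ω, T 1 1 ω ≤ 1 := hTrange 1 h1 1 le_rfl
  have hT0le : ∀ ω, T 1 0 ω ≤ 1 := hTrange 1 h1 0 (by norm_num)
  set V : Ω → (ℕ → ℝ) × ℕ × ℕ := fun ω => ((fun t : ℕ => Y 1 t ω), T 1 1 ω, T 1 0 ω) with hVdef
  have hInd : IndepFun V Z P := hIndep 1 h1
  -- the four "g" functions
  set gt1 : (ℕ → ℝ) × ℕ × ℕ → ℝ := fun p => (p.2.1 : ℝ) with hgt1def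
  set gt0 : (ℕ → ℝ) × ℕ × ℕ → ℝ := fun p => (p.2.2 : ℝ) with hgt0def
  set gf1 : (ℕ → ℝ) × ℕ × ℕ → ℝ := fun p => if p.2.1 = 1 then p.1 1 else p.1 0 with hgf1def
  set gf0 : (ℕ → ℝ) × ℕ × ℕ → ℝ := fun p => if p.2.2 = 1 then p.1 1 else p.1 0 with hgf0def
  have hS1 : MeasurableSet {p : (ℕ → ℝ) × ℕ × ℕ | p.2.1 = 1} :=
    (measurable_fst.comp measurable_snd) (measurableSet_singleton 1)
  have hS0 : MeasurableSet {p : (ℕ → ℝ) × ℕ × ℕ | p.2.2 = 1} :=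
    (measurable_snd.comp measurable_snd) (measurableSet_singleton 1)
  have hmgt1 : Measurable gt1 :=
    (Measurable.of_discrete (f := fun n : ℕ => (n : ℝ))).comp (measurable_fst.comp measurable_snd)
  have hmgt0 : Measurable gt0 :=
    (Measurable.of_discrete (f := fun n : ℕ => (n : ℝ))).comp (measurable_snd.comp measurable_snd)
  have hmgf1 : Measurable gf1 :=
    Measurable.ite hS1 ((measurable_pi_apply 1).comp measurable_fst)
      ((measurable_pi_apply 0).comp measurable_fst)
  have hmgf0 : Measurable gf0 :=
    Measurable.ite hS0 ((measurable_pi_apply 1).comp measurable_fst)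
      ((measurable_pi_apply 0).comp measurable_fst)
  -- integrability
  have hY1int : MeasureTheory.Integrable (Y 1 1) P := hYint 1 h1 1 le_rfl
  have hY0int : MeasureTheory.Integrable (Y 1 0) P := hYint 1 h1 0 (by norm_num)
  have hintT : ∀ (S : Ω → ℕ), Measurable S → (∀ ω, S ω ≤ 1) →
      MeasureTheory.Integrable (fun ω => (S ω : ℝ)) P := by
    intro S hSm hSle
    have : (fun ω => (S ω : ℝ)) = Set.indicator {ω | S ω = 1} (fun _ => (1:ℝ)) := by
      funext ω
      rcases Nat.le_one_iff_eq_zero_or_eq_one.mp (hSle ω) with h | h <;> simp [h]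
    rw [this]
    exact (integrable_const 1).indicator (hSm (measurableSet_singleton 1))
  have hintF : ∀ (S : Ω → ℕ), Measurable S →
      MeasureTheory.Integrable (fun ω => if S ω = 1 then Y 1 1 ω else Y 1 0 ω) P := by
    intro S hSm
    have hM : MeasurableSet {ω | S ω = 1} := hSm (measurableSet_singleton 1)
    have : (fun ω => if S ω = 1 then Y 1 1 ω else Y 1 0 ω) =
        fun ω => Set.indicator {ω | S ω = 1} (Y 1 1) ω
          + Set.indicator {ω | S ω = 1}ᶜ (Y 1 0) ω := by
      funext ω; by_cases h : S ω = 1 <;> simp [h]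
    rw [this]
    exact (hY1int.indicator hM).add (hY0int.indicator hM.compl)
  have hintgt1 : MeasureTheory.Integrable (fun ω => gt1 (V ω)) P :=
    hintT (T 1 1) (hTmeas 1 1) hT1le
  have hintgt0 : MeasureTheory.Integrable (fun ω => gt0 (V ω)) P :=
    hintT (T 1 0) (hTmeas 1 0) hT0le
  have hintgf1 : MeasureTheory.Integrable (fun ω => gf1 (V ω)) P := hintF (T 1 1) (hTmeas 1 1)
  have hintgf0 : MeasureTheory.Integrable (fun ω => gf0 (V ω)) P := hintF (T 1 0) (hTmeas 1 0)
  -- positivity of both arms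
  have hA0eq : {ω | Z ω = 0} = {ω | Z ω = 1}ᶜ := by
    ext ω; have := hZbin ω; simp only [Set.mem_setOf_eq, Set.mem_compl_iff]; omega
  have hA1ne : P {ω | Z ω = 1} ≠ 0 := hZpos.ne'
  have hA0ne : P {ω | Z ω = 0} ≠ 0 := by
    have hm1 : MeasurableSet {ω | Z ω = 1} := hZmeas (measurableSet_singleton 1)
    rw [hA0eq, prob_compl_eq_one_sub hm1]
    simp only [ne_eq, tsub_eq_zero_iff_le, not_le]
    exact hZlt
  -- key identification for each arm
  have key : ∀ (z : ℕ) (F : Ω → ℝ) (g : (ℕ → ℝ) × ℕ × ℕ → ℝ), Measurable g →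
      MeasureTheory.Integrable (fun ω => g (V ω)) P →
      (∀ ω, Z ω = z → F ω = g (V ω)) → P {ω | Z ω = z} ≠ 0 →
      cmean P {ω | Z ω = z} F = ∫ ω, g (V ω) ∂P := by
    intro z F g hg hint hFg hne
    rw [cmean_eq_inv_mul]
    have hmeasA : MeasurableSet {ω | Z ω = z} := hZmeas (measurableSet_singleton z)
    rw [setIntegral_congr_fun hmeasA (fun ω hω => hFg ω hω),
      indep_setIntegral P hZmeas hInd hg hint z, ← mul_assoc,
      inv_mul_cancel₀ (ENNReal.toReal_ne_zero.mpr ⟨hne, measure_ne_top P _⟩), one_mul]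
  have cT1 : cmean P {ω | Z ω = 1} (fun ω => (T 1 (Z ω) ω : ℝ)) = ∫ ω, gt1 (V ω) ∂P :=
    key 1 _ gt1 hmgt1 hintgt1 (fun ω hω => by simp [hω, hgt1def, hVdef]) hA1ne
  have cT0 : cmean P {ω | Z ω = 0} (fun ω => (T 1 (Z ω) ω : ℝ)) = ∫ ω, gt0 (V ω) ∂P :=
    key 0 _ gt0 hmgt0 hintgt0 (fun ω hω => by simp [hω, hgt0def, hVdef]) hA0ne
  have cY1 : cmean P {ω | Z ω = 1} (fun ω => Y 1 (T 1 (Z ω) ω) ω) = ∫ ω, gf1 (V ω) ∂P :=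
    key 1 _ gf1 hmgf1 hintgf1 (fun ω hω => by
      rcases Nat.le_one_iff_eq_zero_or_eq_one.mp (hT1le ω) with h | h <;>
        simp [hω, h, hgf1def, hVdef]) hA1ne
  have cY0 : cmean P {ω | Z ω = 0} (fun ω => Y 1 (T 1 (Z ω) ω) ω) = ∫ ω, gf0 (V ω) ∂P :=
    key 0 _ gf0 hmgf0 hintgf0 (fun ω hω => by
      rcases Nat.le_one_iff_eq_zero_or_eq_one.mp (hT0le ω) with h | h <;>
        simp [hω, h, hgf0def, hVdef]) hA0ne
  -- the complier event
  have hC : MeasurableSet {ω | T 1 0 ω < T 1 1 ω} := measurableSet_lt (hTmeas 1 0) (hTmeas 1 1)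
  -- denominator
  have hden : (∫ ω, gt1 (V ω) ∂P) - (∫ ω, gt0 (V ω) ∂P)
      = (P {ω | T 1 0 ω < T 1 1 ω}).toReal := by
    rw [← integral_sub hintgt1 hintgt0]
    have hae : (fun ω => gt1 (V ω) - gt0 (V ω)) =ᵐ[P]
        Set.indicator {ω | T 1 0 ω < T 1 1 ω} (fun _ => (1:ℝ)) := by
      filter_upwards [hMono 1 h1] with ω hω
      by_cases h : T 1 0 ω < T 1 1 ω
      · have e1 : T 1 1 ω = 1 := by have := hT1le ω; omega
        have e0 : T 1 0 ω = 0 := by omega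
        simp [hgt1def, hgt0def, hVdef, Set.indicator, h, e0, e1]
      · have heq : T 1 0 ω = T 1 1 ω := le_antisymm hω (not_lt.mp h)
        simp [hgt1def, hgt0def, hVdef, Set.indicator, h, heq]
    rw [integral_congr_ae hae, integral_indicator hC, setIntegral_const, smul_eq_mul, mul_one, measureReal_def]
  -- numerator
  have hnum : (∫ ω, gf1 (V ω) ∂P) - (∫ ω, gf0 (V ω) ∂P)
      = ∫ ω in {ω | T 1 0 ω < T 1 1 ω}, (Y 1 1 ω - Y 1 0 ω) ∂P := by
    rw [← integral_sub hintgf1 hintgf0]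
    have hae : (fun ω => gf1 (V ω) - gf0 (V ω)) =ᵐ[P]
        Set.indicator {ω | T 1 0 ω < T 1 1 ω} (fun ω => Y 1 1 ω - Y 1 0 ω) := by
      filter_upwards [hMono 1 h1] with ω hω
      by_cases h : T 1 0 ω < T 1 1 ω
      · have e1 : T 1 1 ω = 1 := by have := hT1le ω; omega
        have e0 : T 1 0 ω = 0 := by omega
        simp [hgf1def, hgf0def, hVdef, Set.indicator, h, e0, e1]
      · have heq : T 1 0 ω = T 1 1 ω := le_antisymm hω (not_lt.mp h)
        simp [hgf1def, hgf0def, hVdef, Set.indicator, h, heq]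
    rw [integral_congr_ae hae, integral_indicator hC]
  -- positivity of compliers
  have hCpos : 0 < P {ω | T 1 0 ω < T 1 1 ω} := by
    have hlt : (0:ℝ) < (P {ω | T 1 0 ω < T 1 1 ω}).toReal := by
      rw [← hden]
      have := hRel
      rw [cT1, cT0] at this
      linarith
    exact (ENNReal.toReal_pos_iff.mp hlt).1
  refine ⟨hCpos, ?_⟩
  rw [cT1, cT0, cY1, cY0, hden, hnum, cmean_eq_inv_mul, inv_mul_eq_div]
end

section
/- Under Independence and Monotonicity, for each wave w the reduced form decomposes as a weighted average of incremental complier effects: ρ_w = Σ_{t=1}^{w} c_{w,t} · π_{w,t}, where c_{w,t} = E[Y_w(t) − Y_w(t−1) | T_w(1) ≥ t > T_w(0)] whenever π_{w,t} > 0, and the t-th term is zero whenever π_{w,t} = 0. -/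
open MeasureTheory ProbabilityTheory Finset

/-!
Conditioning on `Z = z` leaves the potential outcomes and exposures unchanged by independence,
so the reduced form is `E[Y(T(1))] - E[Y(T(0))]`. Under monotonicity the difference
`Y(T(1)) - Y(T(0))` telescopes into the increments `Y(t) - Y(t-1)` over the exposure levels
`T(0) < t ≤ T(1)`; the expectation of the `t`-th increment over the complier event
`{T(0) < t ≤ T(1)}` is `c_t π_t`, and it vanishes when that event is null.
-/

section Telescoping

variable {M : Type*} [AddCommGroup M]

lemma Finset.sum_Ioc_sub_pred (f : ℕ → M) {a b : ℕ} (hab : a ≤ b) :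
    ∑ t ∈ Ioc a b, (f t - f (t - 1)) = f b - f a := by
  induction b, hab using Nat.le_induction with
  | base => simp
  | succ b hab ih => rw [sum_Ioc_succ_top hab, ih, Nat.add_sub_cancel, sub_add_sub_cancel']

lemma sub_eq_sum_Icc_ite_sub_pred (f : ℕ → M) {a b n : ℕ} (hab : a ≤ b) (hbn : b ≤ n) :
    f b - f a = ∑ t ∈ Icc 1 n, if a < t ∧ t ≤ b then f t - f (t - 1) else 0 := by
  rw [← sum_filter, ← sum_Ioc_sub_pred f hab]
  congr 1
  ext t
  simp only [mem_Ioc, mem_filter, mem_Icc]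
  omega

end Telescoping

section ConditionalMean

variable {Ω : Type*} [MeasurableSpace Ω] {P : Measure Ω}

lemma cmean_eq_inv_mul_setIntegral (A : Set Ω) (X : Ω → ℝ) :
    cmean P A X = (P A).toReal⁻¹ * ∫ ω in A, X ω ∂P := by
  rw [cmean, ProbabilityTheory.cond, integral_smul_measure, ENNReal.toReal_inv, smul_eq_mul]

lemma cmean_mul_toReal [IsFiniteMeasure P] (A : Set Ω) (X : Ω → ℝ) :
    cmean P A X * (P A).toReal = ∫ ω in A, X ω ∂P := by
  rcases eq_or_ne (P A) 0 with hA | hA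
  · simp [Measure.restrict_eq_zero.mpr hA, hA]
  · rw [cmean_eq_inv_mul_setIntegral, mul_comm, ← mul_assoc, mul_inv_cancel₀
      (ENNReal.toReal_ne_zero.mpr ⟨hA, measure_ne_top P A⟩), one_mul]

lemma cmean_congr {A : Set Ω} {X X' : Ω → ℝ} (hA : MeasurableSet A)
    (h : ∀ ω ∈ A, X ω = X' ω) : cmean P A X = cmean P A X' :=
  integral_congr_ae ((ae_cond_mem hA).mono h)

lemma ProbabilityTheory.IndepFun.cmean_preimage_eq_integral [IsFiniteMeasure P] {β : Type*}
    [MeasurableSpace β] {X : Ω → ℝ} {Z : Ω → β} (hXZ : IndepFun X Z P) (hX : AEMeasurable X P)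
    (hZ : Measurable Z) {s : Set β} (hs : MeasurableSet s) (hne : P (Z ⁻¹' s) ≠ 0) :
    cmean P (Z ⁻¹' s) X = ∫ ω, X ω ∂P := by
  have hset : ∫ ω in Z ⁻¹' s, X ω ∂P = P.real (Z ⁻¹' s) * ∫ ω, X ω ∂P :=
    ((IndepFun_iff_Indep _ _ _).mp hXZ.symm).setIntegral_eq_mul (f := id) hZ.comap_le hX
      ⟨s, hs, rfl⟩ aestronglyMeasurable_id
  rw [cmean_eq_inv_mul_setIntegral, hset, ← mul_assoc, measureReal_def, inv_mul_cancel₀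
    (ENNReal.toReal_ne_zero.mpr ⟨hne, measure_ne_top P _⟩), one_mul]

end ConditionalMean

section PotentialOutcomes

variable {Ω : Type*} [MeasurableSpace Ω] {P : Measure Ω}

lemma integrable_apply_index_of_le {Y : ℕ → Ω → ℝ} {T : Ω → ℕ} {n : ℕ} (hT : Measurable T)
    (hTn : ∀ ω, T ω ≤ n) (hY : ∀ t ≤ n, Integrable (Y t) P) :
    Integrable (fun ω => Y (T ω) ω) P := by
  have hsum : (fun ω => Y (T ω) ω)
      = fun ω => ∑ t ∈ range (n + 1), {ω' | T ω' = t}.indicator (Y t) ω := by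
    funext ω
    rw [sum_eq_single_of_mem (T ω) (mem_range.mpr (Nat.lt_succ_of_le (hTn ω)))]
    · simp
    · intro t _ ht
      exact Set.indicator_of_notMem (s := {ω' | T ω' = t}) (Ne.symm ht) (Y t)
  rw [hsum]
  exact integrable_finsetSum _ fun t ht =>
    (hY t (Nat.lt_succ_iff.mp (mem_range.mp ht))).indicator (hT (measurableSet_singleton t))

lemma ProbabilityTheory.IndepFun.apply_index {β γ : Type*} [MeasurableSpace β]
    [MeasurableSpace γ] {Y : ℕ → Ω → ℝ} {V : Ω → γ} {Z : Ω → β}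
    (h : IndepFun (fun ω => ((fun t => Y t ω), V ω)) Z P) {g : γ → ℕ} (hg : Measurable g) :
    IndepFun (fun ω => Y (g (V ω)) ω) Z P := by
  have heval : Measurable fun p : (ℕ → ℝ) × ℕ => p.1 p.2 :=
    measurable_from_prod_countable_left measurable_pi_apply
  exact h.comp (heval.comp (measurable_fst.prodMk (hg.comp measurable_snd))) measurable_id

lemma integral_sub_eq_sum_cmean_mul [IsFiniteMeasure P] {Y : ℕ → Ω → ℝ} {T₀ T₁ : Ω → ℕ} {n : ℕ}
    (hT₀ : Measurable T₀) (hT₁ : Measurable T₁) (hT₁n : ∀ ω, T₁ ω ≤ n)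
    (hY : ∀ t ≤ n, Integrable (Y t) P) (hmono : ∀ᵐ ω ∂P, T₀ ω ≤ T₁ ω) :
    ∫ ω, (Y (T₁ ω) ω - Y (T₀ ω) ω) ∂P
      = ∑ t ∈ Icc 1 n, cmean P {ω | T₀ ω < t ∧ t ≤ T₁ ω} (fun ω => Y t ω - Y (t - 1) ω)
          * (P {ω | T₀ ω < t ∧ t ≤ T₁ ω}).toReal := by
  have hC : ∀ t, MeasurableSet {ω | T₀ ω < t ∧ t ≤ T₁ ω} := fun t =>
    (hT₀ measurableSet_Iio).inter (hT₁ measurableSet_Ici)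
  simp_rw [cmean_mul_toReal, ← integral_indicator (hC _)]
  rw [← integral_finsetSum]
  · refine integral_congr_ae ?_
    filter_upwards [hmono] with ω hω
    simp only [Set.indicator_apply, Set.mem_ofPred_eq]
    exact sub_eq_sum_Icc_ite_sub_pred (Y · ω) hω (hT₁n ω)
  · intro t ht
    have ht' := mem_Icc.mp ht
    exact ((hY t ht'.2).sub (hY (t - 1) (by omega))).indicator (hC t)

end PotentialOutcomes

theorem reduced_form_decomposition_general
    {Ω : Type*} [MeasurableSpace Ω] (P : MeasureTheory.Measure Ω) [IsProbabilityMeasure P]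
    (Z : Ω → ℕ) (hZmeas : Measurable Z) (hZbin : ∀ ω, Z ω ≤ 1)
    (hZpos : 0 < P {ω | Z ω = 1}) (hZlt : P {ω | Z ω = 1} < 1)
    (wbar : ℕ)
    (T : ℕ → ℕ → Ω → ℕ) (hTmeas : ∀ w z, Measurable (T w z))
    (hTrange : ∀ w ∈ Set.Icc 1 wbar, ∀ z ≤ 1, ∀ ω, T w z ω ≤ w)
    (Y : ℕ → ℕ → Ω → ℝ)
    (hYint : ∀ w ∈ Set.Icc 1 wbar, ∀ t ≤ w, MeasureTheory.Integrable (Y w t) P)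
    (hIndep : ∀ w ∈ Set.Icc 1 wbar,
      IndepFun (fun ω => ((fun t : ℕ => Y w t ω), T w 1 ω, T w 0 ω)) Z P)
    (hMono : ∀ w ∈ Set.Icc 1 wbar, ∀ᵐ ω ∂P, T w 0 ω ≤ T w 1 ω) :
    ∀ w ∈ Set.Icc 1 wbar,
      cmean P {ω | Z ω = 1} (fun ω => Y w (T w (Z ω) ω) ω)
        - cmean P {ω | Z ω = 0} (fun ω => Y w (T w (Z ω) ω) ω)
      = ∑ t ∈ Finset.Icc 1 w,
          cmean P {ω | T w 0 ω < t ∧ t ≤ T w 1 ω} (fun ω => Y w t ω - Y w (t - 1) ω)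
            * (P {ω | T w 0 ω < t ∧ t ≤ T w 1 ω}).toReal := by
  intro w hw
  have hZm : ∀ z, MeasurableSet {ω | Z ω = z} := fun z => hZmeas (measurableSet_singleton z)
  have hint : ∀ z ≤ 1, Integrable (fun ω => Y w (T w z ω) ω) P := fun z hz =>
    integrable_apply_index_of_le (hTmeas w z) (hTrange w hw z hz) (hYint w hw)
  have hcond : ∀ z ≤ 1, P {ω | Z ω = z} ≠ 0 → IndepFun (fun ω => Y w (T w z ω) ω) Z P →
      cmean P {ω | Z ω = z} (fun ω => Y w (T w (Z ω) ω) ω) = ∫ ω, Y w (T w z ω) ω ∂P := by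
    intro z hz hne hind
    rw [cmean_congr (X' := fun ω => Y w (T w z ω) ω) (hZm z) fun ω (hω : Z ω = z) => by rw [hω]]
    exact hind.cmean_preimage_eq_integral (hint z hz).aemeasurable hZmeas
      (measurableSet_singleton z) hne
  have hZ0 : P {ω | Z ω = 0} ≠ 0 := by
    have hcompl : {ω | Z ω = 0} = {ω | Z ω = 1}ᶜ := by
      ext ω
      have := hZbin ω
      simp only [Set.mem_ofPred_eq, Set.mem_compl_iff]
      omega
    rw [hcompl, prob_compl_eq_one_sub (hZm 1)]
    exact (tsub_pos_of_lt hZlt).ne'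
  rw [hcond 1 le_rfl hZpos.ne' ((hIndep w hw).apply_index measurable_fst),
    hcond 0 zero_le_one hZ0 ((hIndep w hw).apply_index measurable_snd),
    ← integral_sub (hint 1 le_rfl) (hint 0 zero_le_one)]
  exact integral_sub_eq_sum_cmean_mul (hTmeas w 0) (hTmeas w 1) (hTrange w hw 1 le_rfl)
    (hYint w hw) (hMono w hw)

theorem reduced_form_decomposition
    {Ω : Type*} [MeasurableSpace Ω] (P : MeasureTheory.Measure Ω) [IsProbabilityMeasure P]
    (Z : Ω → ℕ) (hZmeas : Measurable Z) (hZbin : ∀ ω, Z ω ≤ 1)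
    (hZpos : 0 < P {ω | Z ω = 1}) (hZlt : P {ω | Z ω = 1} < 1)
    (wbar : ℕ) (hwbar : 1 ≤ wbar)
    (T : ℕ → ℕ → Ω → ℕ) (hTmeas : ∀ w z, Measurable (T w z))
    (hTrange : ∀ w ∈ Set.Icc 1 wbar, ∀ z ≤ 1, ∀ ω, T w z ω ≤ w)
    (Y : ℕ → ℕ → Ω → ℝ) (hYmeas : ∀ w t, Measurable (Y w t))
    (hYint : ∀ w ∈ Set.Icc 1 wbar, ∀ t ≤ w, MeasureTheory.Integrable (Y w t) P)
    (hIndep : ∀ w ∈ Set.Icc 1 wbar,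
      IndepFun (fun ω => ((fun t : ℕ => Y w t ω), T w 1 ω, T w 0 ω)) Z P)
    (hMono : ∀ w ∈ Set.Icc 1 wbar, ∀ᵐ ω ∂P, T w 0 ω ≤ T w 1 ω) :
    ∀ w ∈ Set.Icc 1 wbar,
      cmean P {ω | Z ω = 1} (fun ω => Y w (T w (Z ω) ω) ω)
        - cmean P {ω | Z ω = 0} (fun ω => Y w (T w (Z ω) ω) ω)
      = ∑ t ∈ Finset.Icc 1 w,
          cmean P {ω | T w 0 ω < t ∧ t ≤ T w 1 ω} (fun ω => Y w t ω - Y w (t - 1) ω)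
            * (P {ω | T w 0 ω < t ∧ t ≤ T w 1 ω}).toReal :=
  reduced_form_decomposition_general P Z hZmeas hZbin hZpos hZlt wbar T hTmeas hTrange Y hYint
    hIndep hMono
end

section
/- When treatment is absorbing, for any two waves i ≤ t ≤ w̄ the immediate-complier events coincide pointwise: {ω : T_i(1)(ω) ≥ i > T_i(0)(ω)} = {ω : T_t(1)(ω) ≥ t > T_t(0)(ω)}; in particular π_{t,t} = π_{1,1} for every wave t. -/
open MeasureTheory ProbabilityTheory Finset

/-!
Once treated, a unit's exposure grows by one per wave, and an untreated unit can at most start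
treatment. So from wave `w ≥ 1` to `w + 1` the statements "exposure ≥ w" and "exposure < w"
each shift by exactly one wave, for both potential paths. An immediate complier at wave `w`
therefore stays one at wave `w + 1` and conversely, and induction on the wave does the rest.
-/

/-- Absorbing treatment over one wave: exposure `a` at wave `w` becomes exposure `b` at `w + 1`. -/
def AbsorbingStep (a b : ℕ) : Prop :=
  (1 ≤ a → b = a + 1) ∧ (a = 0 → b ≤ 1)

namespace AbsorbingStep

variable {a b w : ℕ}

theorem le_iff_succ_le (h : AbsorbingStep a b) (hw : 1 ≤ w) : w ≤ a ↔ w + 1 ≤ b := by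
  rcases Nat.eq_zero_or_pos a with ha | ha
  · have := h.2 ha
    omega
  · have := h.1 ha
    omega

theorem lt_iff_lt_succ (h : AbsorbingStep a b) (hw : 1 ≤ w) : a < w ↔ b < w + 1 := by
  simpa only [not_le] using (h.le_iff_succ_le hw).not

end AbsorbingStep

section ImmediateCompliers

variable {Ω : Type*} (T : ℕ → ℕ → Ω → ℕ)

def immediateCompliers (w : ℕ) : Set Ω :=
  {ω | T w 0 ω < w ∧ w ≤ T w 1 ω}

variable {T}

theorem immediateCompliers_succ {w : ℕ} (hw : 1 ≤ w)
    (h0 : ∀ ω, AbsorbingStep (T w 0 ω) (T (w + 1) 0 ω))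
    (h1 : ∀ ω, AbsorbingStep (T w 1 ω) (T (w + 1) 1 ω)) :
    immediateCompliers T w = immediateCompliers T (w + 1) := by
  ext ω
  exact and_congr ((h0 ω).lt_iff_lt_succ hw) ((h1 ω).le_iff_succ_le hw)

theorem immediateCompliers_eq_of_le {wbar i t : ℕ}
    (hAbs : ∀ z ≤ 1, ∀ w, 1 ≤ w → w < wbar → ∀ ω, AbsorbingStep (T w z ω) (T (w + 1) z ω))
    (hi : 1 ≤ i) (hit : i ≤ t) (ht : t ≤ wbar) :
    immediateCompliers T i = immediateCompliers T t := by
  induction t, hit using Nat.le_induction with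
  | base => rfl
  | succ w hiw ih =>
    have hw : 1 ≤ w := hi.trans hiw
    have hwbar : w < wbar := ht
    rw [ih hwbar.le]
    exact immediateCompliers_succ hw (hAbs 0 zero_le_one w hw hwbar)
      (hAbs 1 le_rfl w hw hwbar)

end ImmediateCompliers

theorem immediate_complier_events_coincide_general
    {Ω : Type*} [MeasurableSpace Ω] (P : MeasureTheory.Measure Ω)
    (wbar : ℕ)
    (T : ℕ → ℕ → Ω → ℕ)
    (hAbs : ∀ z ≤ 1, ∀ w, 1 ≤ w → w < wbar → ∀ ω,
      (1 ≤ T w z ω → T (w + 1) z ω = T w z ω + 1) ∧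
      (T w z ω = 0 → T (w + 1) z ω ≤ 1)) :
    (∀ i t, 1 ≤ i → i ≤ t → t ≤ wbar →
      {ω | T i 0 ω < i ∧ i ≤ T i 1 ω} = {ω | T t 0 ω < t ∧ t ≤ T t 1 ω}) ∧
    (∀ t ∈ Set.Icc 1 wbar,
      P {ω | T t 0 ω < t ∧ t ≤ T t 1 ω} = P {ω | T 1 0 ω < 1 ∧ 1 ≤ T 1 1 ω}) := by
  have hEq : ∀ i t, 1 ≤ i → i ≤ t → t ≤ wbar →
      immediateCompliers T i = immediateCompliers T t :=
    fun _ _ hi hit ht => immediateCompliers_eq_of_le hAbs hi hit ht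
  refine ⟨hEq, fun t ht => ?_⟩
  exact congrArg P (hEq 1 t le_rfl ht.1 ht.2).symm

theorem immediate_complier_events_coincide
    {Ω : Type*} [MeasurableSpace Ω] (P : MeasureTheory.Measure Ω) [IsProbabilityMeasure P]
    (wbar : ℕ) (hwbar : 1 ≤ wbar)
    (T : ℕ → ℕ → Ω → ℕ) (hTmeas : ∀ w z, Measurable (T w z))
    (hTrange : ∀ w ∈ Set.Icc 1 wbar, ∀ z ≤ 1, ∀ ω, T w z ω ≤ w)
    (hAbs : ∀ z ≤ 1, ∀ w, 1 ≤ w → w < wbar → ∀ ω,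
      (1 ≤ T w z ω → T (w + 1) z ω = T w z ω + 1) ∧
      (T w z ω = 0 → T (w + 1) z ω ≤ 1)) :
    (∀ i t, 1 ≤ i → i ≤ t → t ≤ wbar →
      {ω | T i 0 ω < i ∧ i ≤ T i 1 ω} = {ω | T t 0 ω < t ∧ t ≤ T t 1 ω}) ∧
    (∀ t ∈ Set.Icc 1 wbar,
      P {ω | T t 0 ω < t ∧ t ≤ T t 1 ω} = P {ω | T 1 0 ω < 1 ∧ 1 ≤ T 1 1 ω}) :=
  immediate_complier_events_coincide_general P wbar T hAbs
end

section
/- Immediate always-taker covariate means: suppose (X, T_1(1), T_1(0)) is independent of Z, Monotonicity holds, and P(T_1 = 1, Z = 0) > 0. Then E[X | T_1(1) = T_1(0) = 1] = E[X | T_1 = 1, Z = 0]. -/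
/-!
Write `Y = (X, T₁(1), T₁(0))`. Under monotonicity and `T₁(1) ≤ 1`, the always-takers
`{T₁(1) = T₁(0) = 1}` coincide almost surely with `{T₁(0) = 1}`, while the observed cell
`{T₁ = 1, Z = 0}` is exactly `{T₁(0) = 1} ∩ {Z = 0}`. Since `Y` is independent of `Z`, conditioning
on `{Z = 0}` does not change the law of `Y`, hence neither its law given `T₁(0) = 1`; both
conditional means are the mean of the first coordinate under that law.
-/

open MeasureTheory ProbabilityTheory Finset

namespace ProbabilityTheory

variable {Ω α β : Type*} [MeasurableSpace Ω] [MeasurableSpace α] [MeasurableSpace β]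
  {μ : Measure Ω} {Y : Ω → α} {W : Ω → β} {s : Set α} {t : Set β}

lemma cond_congr_ae {s t : Set Ω} (h : s =ᵐ[μ] t) : μ[|s] = μ[|t] := by
  rw [cond, cond, measure_congr h, Measure.restrict_congr_set h]

lemma map_cond_preimage (hY : Measurable Y) (hs : MeasurableSet s) :
    (μ[|Y ⁻¹' s]).map Y = (μ.map Y)[|s] := by
  ext u hu
  rw [Measure.map_apply hY hu, cond_apply (hY hs), cond_apply hs, Measure.map_apply hY hs,
    Measure.map_apply hY (hs.inter hu), Set.preimage_inter]

lemma IndepFun.map_cond_preimage_right [IsFiniteMeasure μ] (hY : Measurable Y)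
    (hW : Measurable W) (hind : IndepFun Y W μ) (ht : MeasurableSet t) (hμt : μ (W ⁻¹' t) ≠ 0) :
    (μ[|W ⁻¹' t]).map Y = μ.map Y := by
  ext u hu
  rw [Measure.map_apply hY hu, Measure.map_apply hY hu, cond_apply (hW ht),
    Set.inter_comm, hind.measure_inter_preimage_eq_mul u t hu ht, mul_comm, mul_assoc,
    ENNReal.mul_inv_cancel hμt (measure_ne_top μ _), mul_one]

lemma IndepFun.map_cond_inter_preimage [IsFiniteMeasure μ] (hY : Measurable Y)
    (hW : Measurable W) (hind : IndepFun Y W μ) (hs : MeasurableSet s) (ht : MeasurableSet t)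
    (hμt : μ (W ⁻¹' t) ≠ 0) :
    (μ[|Y ⁻¹' s ∩ W ⁻¹' t]).map Y = (μ[|Y ⁻¹' s]).map Y := by
  rw [Set.inter_comm, ← cond_cond_eq_cond_inter (hW ht) (hY hs), map_cond_preimage hY hs,
    map_cond_preimage hY hs, hind.map_cond_preimage_right hY hW ht hμt]

end ProbabilityTheory

theorem immediate_always_taker_covariate_means_general
    {Ω : Type*} [MeasurableSpace Ω] (P : MeasureTheory.Measure Ω) [IsProbabilityMeasure P]
    (Z : Ω → ℕ) (hZmeas : Measurable Z)
    (wbar : ℕ) (hwbar : 1 ≤ wbar)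
    (T : ℕ → ℕ → Ω → ℕ) (hTmeas : ∀ w z, Measurable (T w z))
    (hTrange : ∀ w ∈ Set.Icc 1 wbar, ∀ z ≤ 1, ∀ ω, T w z ω ≤ w)
    (X : Ω → ℝ) (hXmeas : Measurable X)
    (hIndepX1 : IndepFun (fun ω => (X ω, T 1 1 ω, T 1 0 ω)) Z P)
    (hMono : ∀ w ∈ Set.Icc 1 wbar, ∀ᵐ ω ∂P, T w 0 ω ≤ T w 1 ω)
    (hAT : 0 < P {ω | T 1 (Z ω) ω = 1 ∧ Z ω = 0}) :
    cmean P {ω | T 1 1 ω = 1 ∧ T 1 0 ω = 1} X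
      = cmean P {ω | T 1 (Z ω) ω = 1 ∧ Z ω = 0} X := by
  set Y : Ω → ℝ × ℕ × ℕ := fun ω => (X ω, T 1 1 ω, T 1 0 ω)
  have hY : Measurable Y := hXmeas.prodMk ((hTmeas 1 1).prodMk (hTmeas 1 0))
  have hs : MeasurableSet {p : ℝ × ℕ × ℕ | p.2.2 = 1} :=
    measurable_snd.snd (measurableSet_singleton 1)
  have hobserved : {ω | T 1 (Z ω) ω = 1 ∧ Z ω = 0}
      = Y ⁻¹' {p | p.2.2 = 1} ∩ Z ⁻¹' {0} := by
    ext ω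
    simp only [Set.mem_ofPred_eq, Set.mem_inter_iff, Set.mem_preimage, Set.mem_singleton_iff, Y]
    constructor <;> rintro ⟨h, hz⟩ <;> exact ⟨hz ▸ h, hz⟩
  have hstratum : {ω | T 1 1 ω = 1 ∧ T 1 0 ω = 1} =ᵐ[P] Y ⁻¹' {p | p.2.2 = 1} := by
    rw [Filter.eventuallyEq_set]
    filter_upwards [hMono 1 ⟨le_rfl, hwbar⟩] with ω hmono
    have hle := hTrange 1 ⟨le_rfl, hwbar⟩ 1 le_rfl ω
    simp only [Set.mem_ofPred_eq, Set.mem_preimage, Y]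
    omega
  have hB : P (Z ⁻¹' {0}) ≠ 0 := by
    rw [hobserved] at hAT
    exact (hAT.trans_le (measure_mono Set.inter_subset_right)).ne'
  have hmap := hIndepX1.map_cond_inter_preimage hY hZmeas hs (measurableSet_singleton 0) hB
  unfold cmean
  rw [cond_congr_ae hstratum, hobserved]
  change ∫ ω, Prod.fst (Y ω) ∂_ = ∫ ω, Prod.fst (Y ω) ∂_
  rw [← integral_map hY.aemeasurable measurable_fst.aestronglyMeasurable,
    ← integral_map hY.aemeasurable measurable_fst.aestronglyMeasurable, hmap]

theorem immediate_always_taker_covariate_means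
    {Ω : Type*} [MeasurableSpace Ω] (P : MeasureTheory.Measure Ω) [IsProbabilityMeasure P]
    (Z : Ω → ℕ) (hZmeas : Measurable Z) (hZbin : ∀ ω, Z ω ≤ 1)
    (hZpos : 0 < P {ω | Z ω = 1}) (hZlt : P {ω | Z ω = 1} < 1)
    (wbar : ℕ) (hwbar : 1 ≤ wbar)
    (T : ℕ → ℕ → Ω → ℕ) (hTmeas : ∀ w z, Measurable (T w z))
    (hTrange : ∀ w ∈ Set.Icc 1 wbar, ∀ z ≤ 1, ∀ ω, T w z ω ≤ w)
    (X : Ω → ℝ) (hXmeas : Measurable X) (hXint : MeasureTheory.Integrable X P)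
    (hIndepX1 : IndepFun (fun ω => (X ω, T 1 1 ω, T 1 0 ω)) Z P)
    (hMono : ∀ w ∈ Set.Icc 1 wbar, ∀ᵐ ω ∂P, T w 0 ω ≤ T w 1 ω)
    (hAT : 0 < P {ω | T 1 (Z ω) ω = 1 ∧ Z ω = 0}) :
    cmean P {ω | T 1 1 ω = 1 ∧ T 1 0 ω = 1} X
      = cmean P {ω | T 1 (Z ω) ω = 1 ∧ Z ω = 0} X :=
  immediate_always_taker_covariate_means_general P Z hZmeas wbar hwbar T hTmeas hTrange X hXmeas
    hIndepX1 hMono hAT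
end

section
/- Under Monotonicity, IMCO, and absorbing treatment, complier covariate means are constant across waves: if P(T_1(1) > T_1(0)) > 0, then for every wave w ∈ {1,...,w̄} the events {T_w(1) > T_w(0)} and {T_1(1) > T_1(0)} agree up to a P-null set, and hence E[X | T_w(1) > T_w(0)] = E[X | T_1(1) > T_1(0)] for any integrable X : Ω → ℝ. -/
open MeasureTheory ProbabilityTheory Finset

/-!
An exposure path `t` of an absorbing treatment satisfies `t w = w` for every wave `w` once
`t 1 = 1`, and `t w < w` for every wave once `t 1 = 0`. So whether a unit is a complier at
wave `w` under IMCO (`t₀ w < t₁ w = w`) is decided at wave `1` alone, and the complier events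
of all waves coincide pointwise outside the IMCO-null set.
-/

def IsAbsorbingPath (wbar : ℕ) (t : ℕ → ℕ) : Prop :=
  ∀ w, 1 ≤ w → w < wbar → (1 ≤ t w → t (w + 1) = t w + 1) ∧ (t w = 0 → t (w + 1) ≤ 1)

namespace IsAbsorbingPath

variable {wbar : ℕ} {t : ℕ → ℕ}

theorem eq_self_of_first_eq_one (ht : IsAbsorbingPath wbar t) (h1 : t 1 = 1)
    {w : ℕ} (hw1 : 1 ≤ w) (hw : w ≤ wbar) : t w = w := by
  induction w, hw1 using Nat.le_induction with
  | base => exact h1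
  | succ n hn ih =>
    have hstep := (ht n hn hw).1
    have := ih (by omega)
    omega

theorem lt_self_of_first_eq_zero (ht : IsAbsorbingPath wbar t) (h0 : t 1 = 0)
    {w : ℕ} (hw1 : 1 ≤ w) (hw : w ≤ wbar) : t w < w := by
  induction w, hw1 using Nat.le_induction with
  | base => omega
  | succ n hn ih =>
    have ⟨hgrow, hstart⟩ := ht n hn hw
    have := ih (by omega)
    rcases Nat.eq_zero_or_pos (t n) with h | h
    · have := hstart h; omega
    · have := hgrow h; omega

theorem lt_iff_first_lt {t₀ t₁ : ℕ → ℕ} (h₀ : IsAbsorbingPath wbar t₀)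
    (h₁ : IsAbsorbingPath wbar t₁) (hr₀ : t₀ 1 ≤ 1) (hr₁ : t₁ 1 ≤ 1)
    {w : ℕ} (hw1 : 1 ≤ w) (hw : w ≤ wbar) (himco : t₀ w < t₁ w → t₁ w = w) :
    t₀ w < t₁ w ↔ t₀ 1 < t₁ 1 := by
  constructor
  · intro hlt
    have ht₁ : t₁ 1 = 1 := by
      by_contra hne
      have := h₁.lt_self_of_first_eq_zero (by omega) hw1 hw
      have := himco hlt
      omega
    have ht₀ : t₀ 1 = 0 := by
      by_contra hne
      have := h₀.eq_self_of_first_eq_one (by omega) hw1 hw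
      have := himco hlt
      omega
    omega
  · intro hlt
    have := h₀.lt_self_of_first_eq_zero (by omega) hw1 hw
    have := h₁.eq_self_of_first_eq_one (by omega) hw1 hw
    omega

end IsAbsorbingPath

theorem cmean_congr_ae {Ω : Type*} [MeasurableSpace Ω] {P : Measure Ω} {A B : Set Ω}
    (hAB : A =ᵐ[P] B) (X : Ω → ℝ) : cmean P A X = cmean P B X := by
  simp only [cmean, ProbabilityTheory.cond, measure_congr hAB, Measure.restrict_congr_set hAB]

theorem complier_means_constant_across_waves_general
    {Ω : Type*} [MeasurableSpace Ω] (P : MeasureTheory.Measure Ω) [IsProbabilityMeasure P]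
    (wbar : ℕ) (hwbar : 1 ≤ wbar)
    (T : ℕ → ℕ → Ω → ℕ)
    (hTrange : ∀ w ∈ Set.Icc 1 wbar, ∀ z ≤ 1, ∀ ω, T w z ω ≤ w)
    (hAbs : ∀ z ≤ 1, ∀ w, 1 ≤ w → w < wbar → ∀ ω,
      (1 ≤ T w z ω → T (w + 1) z ω = T w z ω + 1) ∧
      (T w z ω = 0 → T (w + 1) z ω ≤ 1))
    (hIMCO : ∀ w ∈ Set.Icc 1 wbar, ∀ᵐ ω ∂P, T w 0 ω < T w 1 ω → T w 1 ω = w) :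
    ∀ w ∈ Set.Icc 1 wbar,
      P (symmDiff {ω | T w 0 ω < T w 1 ω} {ω | T 1 0 ω < T 1 1 ω}) = 0 ∧
      ∀ X : Ω → ℝ, MeasureTheory.Integrable X P →
        cmean P {ω | T w 0 ω < T w 1 ω} X = cmean P {ω | T 1 0 ω < T 1 1 ω} X := by
  intro w hw
  have habs : ∀ z ≤ 1, ∀ ω, IsAbsorbingPath wbar (T · z ω) :=
    fun z hz ω v hv1 hv => hAbs z hz v hv1 hv ω
  have hfirst : ∀ z ≤ 1, ∀ ω, T 1 z ω ≤ 1 := hTrange 1 ⟨le_rfl, hwbar⟩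
  have hae : {ω | T w 0 ω < T w 1 ω} =ᵐ[P] {ω | T 1 0 ω < T 1 1 ω} := by
    refine Filter.eventuallyEq_set.mpr ?_
    filter_upwards [hIMCO w hw] with ω himco
    exact (habs 0 zero_le_one ω).lt_iff_first_lt (habs 1 le_rfl ω) (hfirst 0 zero_le_one ω)
      (hfirst 1 le_rfl ω) hw.1 hw.2 himco
  exact ⟨measure_symmDiff_eq_zero_iff.mpr hae, fun X _ => cmean_congr_ae hae X⟩

theorem complier_means_constant_across_waves
    {Ω : Type*} [MeasurableSpace Ω] (P : MeasureTheory.Measure Ω) [IsProbabilityMeasure P]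
    (wbar : ℕ) (hwbar : 1 ≤ wbar)
    (T : ℕ → ℕ → Ω → ℕ) (hTmeas : ∀ w z, Measurable (T w z))
    (hTrange : ∀ w ∈ Set.Icc 1 wbar, ∀ z ≤ 1, ∀ ω, T w z ω ≤ w)
    (hAbs : ∀ z ≤ 1, ∀ w, 1 ≤ w → w < wbar → ∀ ω,
      (1 ≤ T w z ω → T (w + 1) z ω = T w z ω + 1) ∧
      (T w z ω = 0 → T (w + 1) z ω ≤ 1))
    (hMono : ∀ w ∈ Set.Icc 1 wbar, ∀ᵐ ω ∂P, T w 0 ω ≤ T w 1 ω)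
    (hIMCO : ∀ w ∈ Set.Icc 1 wbar, ∀ᵐ ω ∂P, T w 0 ω < T w 1 ω → T w 1 ω = w)
    (hC : 0 < P {ω | T 1 0 ω < T 1 1 ω}) :
    ∀ w ∈ Set.Icc 1 wbar,
      P (symmDiff {ω | T w 0 ω < T w 1 ω} {ω | T 1 0 ω < T 1 1 ω}) = 0 ∧
      ∀ X : Ω → ℝ, MeasureTheory.Integrable X P →
        cmean P {ω | T w 0 ω < T w 1 ω} X = cmean P {ω | T 1 0 ω < T 1 1 ω} X :=
  complier_means_constant_across_waves_general P wbar hwbar T hTrange hAbs hIMCO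
end

section
/- Later always-taker covariate means: suppose (X, T_w(1), T_w(0)) is independent of Z for each wave w, and Monotonicity and IMCO hold. Then for each wave w > 1 with P(1 ≤ T_w < w, Z = 1) > 0 and P(w > T_w(1) = T_w(0) ≥ 1) > 0, E[X | w > T_w(1) = T_w(0) ≥ 1] = E[X | 1 ≤ T_w < w, Z = 1]. -/
open MeasureTheory ProbabilityTheory Finset

lemma cmean_eq {Ω : Type*} [MeasurableSpace Ω] (P : MeasureTheory.Measure Ω)
    (s : Set Ω) (X : Ω → ℝ) : cmean P s X = (P s).toReal⁻¹ * ∫ ω in s, X ω ∂P := by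
  simp [cmean, ProbabilityTheory.cond, integral_smul_measure, ENNReal.toReal_inv, smul_eq_mul]

theorem later_always_taker_covariate_means
    {Ω : Type*} [MeasurableSpace Ω] (P : MeasureTheory.Measure Ω) [IsProbabilityMeasure P]
    (Z : Ω → ℕ) (hZmeas : Measurable Z) (hZbin : ∀ ω, Z ω ≤ 1)
    (hZpos : 0 < P {ω | Z ω = 1}) (hZlt : P {ω | Z ω = 1} < 1)
    (wbar : ℕ) (hwbar : 1 ≤ wbar)
    (T : ℕ → ℕ → Ω → ℕ) (hTmeas : ∀ w z, Measurable (T w z))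
    (hTrange : ∀ w ∈ Set.Icc 1 wbar, ∀ z ≤ 1, ∀ ω, T w z ω ≤ w)
    (X : Ω → ℝ) (hXmeas : Measurable X) (hXint : MeasureTheory.Integrable X P)
    (hIndepX : ∀ w ∈ Set.Icc 1 wbar, IndepFun (fun ω => (X ω, T w 1 ω, T w 0 ω)) Z P)
    (hMono : ∀ w ∈ Set.Icc 1 wbar, ∀ᵐ ω ∂P, T w 0 ω ≤ T w 1 ω)
    (hIMCO : ∀ w ∈ Set.Icc 1 wbar, ∀ᵐ ω ∂P, T w 0 ω < T w 1 ω → T w 1 ω = w) :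
    ∀ w, 2 ≤ w → w ≤ wbar →
      0 < P {ω | 1 ≤ T w (Z ω) ω ∧ T w (Z ω) ω < w ∧ Z ω = 1} →
      0 < P {ω | T w 1 ω = T w 0 ω ∧ 1 ≤ T w 0 ω ∧ T w 0 ω < w} →
      cmean P {ω | T w 1 ω = T w 0 ω ∧ 1 ≤ T w 0 ω ∧ T w 0 ω < w} X
        = cmean P {ω | 1 ≤ T w (Z ω) ω ∧ T w (Z ω) ω < w ∧ Z ω = 1} X := by
  intro w hw2 hwbar' hBpos hApos
  have hwmem : w ∈ Set.Icc 1 wbar := ⟨le_trans one_le_two hw2, hwbar'⟩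
  set W : Ω → ℝ × ℕ × ℕ := fun ω => (X ω, T w 1 ω, T w 0 ω) with hWdef
  have hWmeas : Measurable W := hXmeas.prodMk ((hTmeas w 1).prodMk (hTmeas w 0))
  set S : Set (ℝ × ℕ × ℕ) := {p | p.2.1 = p.2.2 ∧ 1 ≤ p.2.2 ∧ p.2.2 < w} with hSdef
  have hSmeas : MeasurableSet S := by
    have : S = Prod.snd ⁻¹' {q : ℕ × ℕ | q.1 = q.2 ∧ 1 ≤ q.2 ∧ q.2 < w} := rfl
    rw [this]
    exact measurable_snd (Set.to_countable _).measurableSet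
  set A : Set Ω := {ω | T w 1 ω = T w 0 ω ∧ 1 ≤ T w 0 ω ∧ T w 0 ω < w} with hAdef
  have hApre : A = W ⁻¹' S := rfl
  have hAmeas : MeasurableSet A := hWmeas hSmeas
  set Z1 : Set Ω := {ω | Z ω = 1} with hZ1def
  have hZ1pre : Z1 = Z ⁻¹' {1} := rfl
  have hZ1meas : MeasurableSet Z1 := hZmeas (measurableSet_singleton 1)
  -- Step 1: the observed event equals C ∩ Z1 where C = {1 ≤ T w 1 < w}
  set C : Set Ω := {ω | 1 ≤ T w 1 ω ∧ T w 1 ω < w} with hCdef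
  have hBeq : {ω | 1 ≤ T w (Z ω) ω ∧ T w (Z ω) ω < w ∧ Z ω = 1} = C ∩ Z1 := by
    ext ω
    constructor
    · rintro ⟨h1, h2, h3⟩
      rw [h3] at h1 h2
      exact ⟨⟨h1, h2⟩, h3⟩
    · rintro ⟨⟨h1, h2⟩, h3⟩
      refine ⟨?_, ?_, h3⟩ <;> rw [show Z ω = 1 from h3] <;> assumption
  -- Step 2: A =ᵐ C
  have hAC : A =ᵐ[P] C := by
    rw [Filter.eventuallyEq_set]
    filter_upwards [hMono w hwmem, hIMCO w hwmem] with ω hm hi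
    constructor
    · rintro ⟨he, h1, h2⟩
      exact ⟨he ▸ h1, he ▸ h2⟩
    · rintro ⟨h1, h2⟩
      have heq : T w 1 ω = T w 0 ω := by
        rcases lt_or_eq_of_le hm with h | h
        · exact absurd (hi h) (Nat.ne_of_lt h2)
        · exact h.symm
      exact ⟨heq, heq ▸ h1, heq ▸ h2⟩
  have hACZ : ((A ∩ Z1 : Set Ω) : Set Ω) =ᵐ[P] ((C ∩ Z1 : Set Ω) : Set Ω) := MeasureTheory.ae_eq_set_inter hAC (Filter.EventuallyEq.refl _ _)
  -- Step 3: reduce to showing cmean over A equals cmean over A ∩ Z1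
  have hcondeq : cmean P (C ∩ Z1) X = cmean P (A ∩ Z1) X := by
    rw [cmean_eq, cmean_eq, measure_congr hACZ, Measure.restrict_congr_set hACZ]
  rw [hBeq, hcondeq]
  -- Step 4: independence computations
  have hIndep := hIndepX w hwmem
  have hPmul : P (A ∩ Z1) = P A * P Z1 := by
    rw [hApre, hZ1pre]
    exact hIndep.measure_inter_preimage_eq_mul S {1} hSmeas (measurableSet_singleton 1)
  have hintmul : ∫ ω in A ∩ Z1, X ω ∂P = (∫ ω in A, X ω ∂P) * (P Z1).toReal := by
    set f : ℝ × ℕ × ℕ → ℝ := fun p => S.indicator (fun _ => (1:ℝ)) p * p.1 with hfdef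
    set g : ℕ → ℝ := fun n => ({1} : Set ℕ).indicator (fun _ => (1:ℝ)) n with hgdef
    have hfmeas : Measurable f := (measurable_const.indicator hSmeas).mul measurable_fst
    have hgmeas : Measurable g :=
      measurable_const.indicator (measurableSet_singleton 1)
    have hIndFG : IndepFun (f ∘ W) (g ∘ Z) P := hIndep.comp hfmeas hgmeas
    have hfW : (f ∘ W) = A.indicator X := by
      funext ω
      by_cases h : ω ∈ A
      · simp [hfdef, Function.comp, Set.indicator_of_mem, h, show W ω ∈ S from h]; rfl
      · simp [hfdef, Function.comp, Set.indicator_of_notMem, h,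
          Set.indicator_of_notMem (show W ω ∉ S from h)]
    have hgZ : (g ∘ Z) = Z1.indicator (fun _ => (1:ℝ)) := by
      funext ω
      by_cases h : ω ∈ Z1
      · simp [hgdef, Function.comp, Set.indicator_of_mem, h, show Z ω ∈ ({1} : Set ℕ) from h, Pi.single_apply,
          show Z ω = 1 from h]
      · simp [hgdef, Function.comp, Set.indicator_of_notMem, h,
          Set.indicator_of_notMem (show Z ω ∉ ({1} : Set ℕ) from h), Pi.single_apply,
          show Z ω ≠ 1 from h]
    have hfint : Integrable (f ∘ W) P := by
      rw [hfW]; exact hXint.indicator hAmeas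
    have hgint : Integrable (g ∘ Z) P := by
      rw [hgZ]
      exact (integrable_const (1:ℝ)).indicator hZ1meas
    have hmul := hIndFG.integral_mul_eq_mul_integral hfint.aestronglyMeasurable hgint.aestronglyMeasurable
    have hprod : (f ∘ W) * (g ∘ Z) = (A ∩ Z1).indicator X := by
      rw [hfW, hgZ]
      funext ω
      by_cases hA : ω ∈ A <;> by_cases hZ : ω ∈ Z1 <;>
        simp [Set.indicator, hA, hZ, Set.mem_inter_iff]
    rw [hprod, hfW, hgZ] at hmul
    rw [integral_indicator (hAmeas.inter hZ1meas)] at hmul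
    rw [integral_indicator hAmeas, integral_indicator hZ1meas] at hmul
    simpa [measureReal_def] using hmul
  -- Step 5: finish with arithmetic
  rw [cmean_eq, cmean_eq, hPmul, hintmul]
  have hZ1ne : (P Z1).toReal ≠ 0 := by
    refine ENNReal.toReal_ne_zero.2 ⟨hZpos.ne', measure_ne_top P Z1⟩
  rw [ENNReal.toReal_mul, mul_inv]
  field_simp
end

section
/- Immediate always-taker potential-outcome means: under Independence, Monotonicity, and absorbing treatment, for each wave w ∈ {1,...,w̄} with P(T_1 = 1, Z = 0) > 0, E[Y_w(w) | T_1(1) = T_1(0) = 1] = E[Y_w | T_1 = 1, Z = 0]. -/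
open MeasureTheory ProbabilityTheory Finset

/-!
By absorption, a unit with `T_1(0) = 1` is exactly one with `T_w(0) = w`, an event `C` defined by
wave-`w` variables. Monotonicity makes the always-taker event `{T_1(1) = T_1(0) = 1}` a.e. equal
to `C`, while the observed event `{T_1 = 1, Z = 0}` is `C ∩ {Z = 0}`, on which `Y_w = Y_w(w)`.
Since `(Y_w(w), 1_C)` is independent of `Z`, additionally conditioning on `{Z = 0}` leaves the
conditional mean of `Y_w(w)` given `C` unchanged.
-/

lemma ProbabilityTheory.cond_congr_ae_s18 {Ω : Type*} [MeasurableSpace Ω] {μ : Measure Ω}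
    {s t : Set Ω} (h : s =ᵐ[μ] t) : μ[|s] = μ[|t] := by
  rw [ProbabilityTheory.cond, ProbabilityTheory.cond, measure_congr h,
    Measure.restrict_congr_set h]

section

variable {Ω β γ : Type*} [MeasurableSpace Ω] [MeasurableSpace β] [MeasurableSpace γ]
  {P : Measure Ω} {V : Ω → β} {W : Ω → γ} {f : β → ℝ}
  {s : Set β} {t : Set γ}

lemma setIntegral_inter_preimage_eq_mul_of_indepFun (hVW : IndepFun V W P)
    (hV : Measurable V) (hW : Measurable W) (hf : Measurable f)
    (hs : MeasurableSet s) (ht : MeasurableSet t) :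
    ∫ ω in V ⁻¹' s ∩ W ⁻¹' t, f (V ω) ∂P
      = (∫ ω in V ⁻¹' s, f (V ω) ∂P) * P.real (W ⁻¹' t) := by
  have hVs : (V ⁻¹' s).indicator (f ∘ V) = s.indicator f ∘ V :=
    funext fun _ => Set.indicator_comp_right V
  have hWt : (W ⁻¹' t).indicator (1 : Ω → ℝ) = t.indicator 1 ∘ W :=
    funext fun _ => Set.indicator_comp_right (g := 1) W
  have hind : IndepFun ((V ⁻¹' s).indicator (f ∘ V)) ((W ⁻¹' t).indicator (1 : Ω → ℝ)) P := by
    rw [hVs, hWt]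
    exact hVW.comp (hf.indicator hs) (measurable_one.indicator ht)
  calc ∫ ω in V ⁻¹' s ∩ W ⁻¹' t, f (V ω) ∂P
      = ∫ ω, (V ⁻¹' s).indicator (f ∘ V) ω * (W ⁻¹' t).indicator 1 ω ∂P := by
        simp_rw [← Set.inter_indicator_mul, Pi.one_apply, mul_one]
        exact (integral_indicator ((hV hs).inter (hW ht))).symm
    _ = (∫ ω in V ⁻¹' s, f (V ω) ∂P) * P.real (W ⁻¹' t) := by
        rw [hind.integral_fun_mul_eq_mul_integral
          (((hf.comp hV).indicator (hV hs)).aestronglyMeasurable)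
          ((measurable_one.indicator (hW ht)).aestronglyMeasurable),
          integral_indicator (hV hs), integral_indicator_one (hW ht)]
        rfl

lemma integral_cond_inter_preimage_of_indepFun [IsFiniteMeasure P] (hVW : IndepFun V W P)
    (hV : Measurable V) (hW : Measurable W) (hf : Measurable f)
    (hs : MeasurableSet s) (ht : MeasurableSet t) (hWt : P (W ⁻¹' t) ≠ 0) :
    ∫ ω, f (V ω) ∂P[|V ⁻¹' s ∩ W ⁻¹' t] = ∫ ω, f (V ω) ∂P[|V ⁻¹' s] := by
  simp only [ProbabilityTheory.cond, integral_smul_measure, smul_eq_mul]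
  rw [setIntegral_inter_preimage_eq_mul_of_indepFun hVW hV hW hf hs ht,
    hVW.measure_inter_preimage_eq_mul s t hs ht, ENNReal.toReal_inv, ENNReal.toReal_inv,
    ENNReal.toReal_mul]
  simp only [← measureReal_def]
  have : P.real (W ⁻¹' t) ≠ 0 := (measureReal_ne_zero_iff).2 hWt
  field_simp

end

lemma eq_self_iff_of_absorbing {a : ℕ → ℕ} {n : ℕ}
    (hstep : ∀ v, 1 ≤ v → v < n → (1 ≤ a v → a (v + 1) = a v + 1) ∧ (a v = 0 → a (v + 1) ≤ 1))
    (ha : a 1 ≤ 1) {w : ℕ} (hw : 1 ≤ w) (hwn : w ≤ n) : a w = w ↔ a 1 = 1 := by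
  suffices ∀ v, 1 ≤ v → v ≤ n → (a v = v ↔ a 1 = 1) ∧ a v ≤ v from (this w hw hwn).1
  intro v hv
  induction v, hv using Nat.le_induction with
  | base => intro; omega
  | succ v hv ih =>
    intro hvn
    have := hstep v hv (by omega)
    have := ih (by omega)
    omega

theorem immediate_always_taker_potential_outcome_means_general
    {Ω : Type*} [MeasurableSpace Ω] (P : MeasureTheory.Measure Ω) [IsProbabilityMeasure P]
    (Z : Ω → ℕ) (hZmeas : Measurable Z)
    (wbar : ℕ) (hwbar : 1 ≤ wbar)
    (T : ℕ → ℕ → Ω → ℕ) (hTmeas : ∀ w z, Measurable (T w z))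
    (hTrange : ∀ w ∈ Set.Icc 1 wbar, ∀ z ≤ 1, ∀ ω, T w z ω ≤ w)
    (Y : ℕ → ℕ → Ω → ℝ) (hYmeas : ∀ w t, Measurable (Y w t))
    (hAbs : ∀ z ≤ 1, ∀ w, 1 ≤ w → w < wbar → ∀ ω,
      (1 ≤ T w z ω → T (w + 1) z ω = T w z ω + 1) ∧
      (T w z ω = 0 → T (w + 1) z ω ≤ 1))
    (hIndep : ∀ w ∈ Set.Icc 1 wbar,
      IndepFun (fun ω => ((fun t : ℕ => Y w t ω), T w 1 ω, T w 0 ω)) Z P)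
    (hMono : ∀ w ∈ Set.Icc 1 wbar, ∀ᵐ ω ∂P, T w 0 ω ≤ T w 1 ω) :
    ∀ w ∈ Set.Icc 1 wbar,
      0 < P {ω | T 1 (Z ω) ω = 1 ∧ Z ω = 0} →
      cmean P {ω | T 1 1 ω = 1 ∧ T 1 0 ω = 1} (fun ω => Y w w ω)
        = cmean P {ω | T 1 (Z ω) ω = 1 ∧ Z ω = 0} (fun ω => Y w (T w (Z ω) ω) ω) := by
  rintro w ⟨hw1, hwb⟩ hpos
  have hwave1 : 1 ∈ Set.Icc 1 wbar := ⟨le_rfl, hwbar⟩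
  have hstay : ∀ ω, T w 0 ω = w ↔ T 1 0 ω = 1 := fun ω =>
    eq_self_iff_of_absorbing (fun v hv hvw => hAbs 0 zero_le_one v hv hvw ω)
      (hTrange 1 hwave1 0 zero_le_one ω) hw1 hwb
  have hObs : {ω | T 1 (Z ω) ω = 1 ∧ Z ω = 0} = {ω | T w 0 ω = w} ∩ Z ⁻¹' {0} := by
    ext ω
    simp only [Set.mem_ofPred_eq, Set.mem_inter_iff, Set.mem_preimage, Set.mem_singleton_iff,
      hstay]
    exact ⟨fun ⟨h, hz⟩ => ⟨hz ▸ h, hz⟩, fun ⟨h, hz⟩ => ⟨hz ▸ h, hz⟩⟩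
  have hAlways : {ω | T 1 1 ω = 1 ∧ T 1 0 ω = 1} =ᵐ[P] {ω | T w 0 ω = w} := by
    refine Filter.eventuallyEq_set.2 ((hMono 1 hwave1).mono fun ω hω => ?_)
    have := hTrange 1 hwave1 1 le_rfl ω
    simp only [Set.mem_ofPred_eq, hstay]
    omega
  have hV : Measurable fun ω => ((fun t => Y w t ω), T w 1 ω, T w 0 ω) :=
    (measurable_pi_lambda _ fun t => hYmeas w t).prodMk ((hTmeas w 1).prodMk (hTmeas w 0))
  have hDmeas : MeasurableSet ({ω | T w 0 ω = w} ∩ Z ⁻¹' {0}) :=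
    (hTmeas w 0 (measurableSet_singleton w)).inter (hZmeas (measurableSet_singleton 0))
  have hZ0 : P (Z ⁻¹' {0}) ≠ 0 := by
    rw [hObs] at hpos
    exact (hpos.trans_le (measure_mono Set.inter_subset_right)).ne'
  have hYobs : ∀ᵐ ω ∂P[|{ω | T w 0 ω = w} ∩ Z ⁻¹' {0}], Y w (T w (Z ω) ω) ω = Y w w ω :=
    (ae_cond_mem hDmeas).mono fun ω ⟨hT, hZ⟩ => by
      rw [show Z ω = 0 from hZ, show T w 0 ω = w from hT]
  unfold cmean
  rw [cond_congr_ae_s18 hAlways, hObs, integral_congr_ae hYobs]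
  exact (integral_cond_inter_preimage_of_indepFun (f := fun p => p.1 w)
    (s := {p : (ℕ → ℝ) × ℕ × ℕ | p.2.2 = w}) (hIndep w ⟨hw1, hwb⟩) hV hZmeas
    ((measurable_pi_apply w).comp measurable_fst)
    (measurable_snd.snd (measurableSet_singleton w)) (measurableSet_singleton 0) hZ0).symm

theorem immediate_always_taker_potential_outcome_means
    {Ω : Type*} [MeasurableSpace Ω] (P : MeasureTheory.Measure Ω) [IsProbabilityMeasure P]
    (Z : Ω → ℕ) (hZmeas : Measurable Z) (hZbin : ∀ ω, Z ω ≤ 1)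
    (hZpos : 0 < P {ω | Z ω = 1}) (hZlt : P {ω | Z ω = 1} < 1)
    (wbar : ℕ) (hwbar : 1 ≤ wbar)
    (T : ℕ → ℕ → Ω → ℕ) (hTmeas : ∀ w z, Measurable (T w z))
    (hTrange : ∀ w ∈ Set.Icc 1 wbar, ∀ z ≤ 1, ∀ ω, T w z ω ≤ w)
    (Y : ℕ → ℕ → Ω → ℝ) (hYmeas : ∀ w t, Measurable (Y w t))
    (hYint : ∀ w ∈ Set.Icc 1 wbar, ∀ t ≤ w, MeasureTheory.Integrable (Y w t) P)
    (hAbs : ∀ z ≤ 1, ∀ w, 1 ≤ w → w < wbar → ∀ ω,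
      (1 ≤ T w z ω → T (w + 1) z ω = T w z ω + 1) ∧
      (T w z ω = 0 → T (w + 1) z ω ≤ 1))
    (hIndep : ∀ w ∈ Set.Icc 1 wbar,
      IndepFun (fun ω => ((fun t : ℕ => Y w t ω), T w 1 ω, T w 0 ω)) Z P)
    (hMono : ∀ w ∈ Set.Icc 1 wbar, ∀ᵐ ω ∂P, T w 0 ω ≤ T w 1 ω) :
    ∀ w ∈ Set.Icc 1 wbar,
      0 < P {ω | T 1 (Z ω) ω = 1 ∧ Z ω = 0} →
      cmean P {ω | T 1 1 ω = 1 ∧ T 1 0 ω = 1} (fun ω => Y w w ω)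
        = cmean P {ω | T 1 (Z ω) ω = 1 ∧ Z ω = 0} (fun ω => Y w (T w (Z ω) ω) ω) :=
  immediate_always_taker_potential_outcome_means_general P Z hZmeas wbar hwbar T hTmeas hTrange Y
    hYmeas hAbs hIndep hMono
end
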